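/- Theorem (Uniform convergence of the Deep Ritz Method): In the two-norm Setting with Assumptions (A1), (A4) and (A5), assume moreover the uniform equi-coercivity condition: for every bounded sequence (g_n) in Y* the sequence of functionals (F_n^{g_n∘j}) is equi-coercive. Let (δ_n) be a sequence of non-negative reals with δ_n → 0, and for f ∈ X* define the approximate solution sets S_n(f) = {x ∈ X : F_n^f(x) ≤ inf_{z∈X} F_n^f(z) + δ_n}. For g ∈ Y* let x^{g∘j} ∈ X₀ denote the unique minimizer of F^{g∘j}. Then for every R > 0, sup{ ‖j(x_n) − j(x^{g∘j})‖_Y : g ∈ Y*, ‖g‖_{Y*} ≤ R, x_n ∈ S_n(g∘j) } → 0 as n → ∞. -/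

import Mathlib

/-!
Suppose the convergence were not uniform: then there are indices `n_k → ∞`, right-hand sides
`‖g_k‖ ≤ R` and quasi-minimizers `x_k ∈ S_{n_k}(g_k ∘ j)` with `|x_k - x^{g_k ∘ j}| > ε`.
Equi-coercivity bounds `x_k`, and reflexivity gives subsequences with `g_k → g₀` weak-* in `Y*`
and `x_k ⇀ x₀` in `X`. The penalty `λ_n ‖γ x‖^p` forces `γ x₀ = 0`, and comparing `x_k` with
recovery sequences from (A1), using weak lower semicontinuity of `E`, shows that `x₀` minimizes
`F^{g₀ ∘ j}`, i.e. `x₀ = x^{g₀ ∘ j}`. Since `j` is completely continuous, `g_k ∘ j → g₀ ∘ j`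
in norm, so by demi-continuity of the solution map and (A4) both `j x_k` and `j x^{g_k ∘ j}`
converge to `j x₀`, a contradiction.
-/

open Filter Topology
open scoped Classical

/-- Weak convergence of a sequence in a normed space: convergence tested against
every continuous linear functional. -/
def WeakTendsto {X : Type*} [NormedAddCommGroup X] [NormedSpace ℝ X]
    (u : ℕ → X) (x : X) : Prop :=
  ∀ φ : X →L[ℝ] ℝ, Tendsto (fun n => φ (u n)) atTop (𝓝 (φ x))

open Function TopologicalSpace NormedSpace

section

variable {V U : Type*} [NormedAddCommGroup V] [NormedSpace ℝ V] [NormedAddCommGroup U]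
  [NormedSpace ℝ U]

namespace Submodule

theorem exists_strongDual_apply_ne_zero_of_notMem (Z : Submodule ℝ V)
    (hZ : IsClosed (Z : Set V)) {x : V} (hx : x ∉ Z) :
    ∃ f : StrongDual ℝ V, f x ≠ 0 ∧ ∀ z ∈ Z, f z = 0 := by
  obtain ⟨f, u, hfx, hfZ⟩ := geometric_hahn_banach_point_closed Z.convex hZ hx
  have hu : u < 0 := by simpa using hfZ 0 Z.zero_mem
  refine ⟨f, by linarith, fun z hz => ?_⟩
  by_contra hfz
  -- a functional bounded below on a subspace vanishes there
  have := hfZ (((u - 1) / f z) • z) (Z.smul_mem _ hz)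
  rw [map_smul, smul_eq_mul, div_mul_cancel₀ _ hfz] at this
  linarith

end Submodule

theorem separableSpace_of_separableSpace_strongDual [SeparableSpace (StrongDual ℝ V)] :
    SeparableSpace V := by
  obtain ⟨G, hG⟩ := exists_dense_seq (StrongDual ℝ V)
  have hv : ∀ i, ∃ v : V, ‖v‖ ≤ 1 ∧ ‖G i‖ / 2 ≤ ‖G i v‖ := fun i => by
    rcases (norm_nonneg (G i)).eq_or_lt with h0 | h0
    · exact ⟨0, by simp, by simp [← h0]⟩
    · obtain ⟨v, hv1, hv2⟩ := (G i).exists_lt_apply_of_lt_opNorm (half_lt_self h0)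
      exact ⟨v, hv1.le, hv2.le⟩
  choose v hv1 hv2 using hv
  set Z := (Submodule.span ℝ (Set.range v)).topologicalClosure
  have hZ : (Z : Set V) = Set.univ := by
    by_contra hZ
    obtain ⟨x, hx⟩ := (Set.ne_univ_iff_exists_notMem _).mp hZ
    obtain ⟨f, hfx, hfZ⟩ := Z.exists_strongDual_apply_ne_zero_of_notMem
      (Submodule.isClosed_topologicalClosure _) hx
    have hf : 0 < ‖f‖ := norm_pos_iff.mpr fun h => hfx (by simp [h])
    obtain ⟨i, hi⟩ := Metric.denseRange_iff.mp hG f (‖f‖ / 3) (by positivity)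
    rw [dist_eq_norm] at hi
    have hfv : f (v i) = 0 :=
      hfZ _ (Submodule.le_topologicalClosure _ (Submodule.subset_span ⟨i, rfl⟩))
    -- `G i` is close to `f`, which kills `v i`, yet `v i` almost norms `G i`
    have hGv : ‖G i (v i)‖ ≤ ‖f - G i‖ := by
      calc ‖G i (v i)‖ = ‖(f - G i) (v i)‖ := by simp [hfv]
        _ ≤ ‖f - G i‖ * ‖v i‖ := (f - G i).le_opNorm _
        _ ≤ ‖f - G i‖ := mul_le_of_le_one_right (norm_nonneg _) (hv1 i)
    linarith [norm_sub_norm_le f (G i), hv2 i]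
  have hsep : IsSeparable (Set.univ : Set V) := by
    rw [← hZ, Submodule.topologicalClosure_coe]
    exact (Set.countable_range v).isSeparable.span.closure
  exact isSeparable_univ_iff.mp hsep

theorem exists_subseq_tendsto_apply_of_separableSpace [SeparableSpace V]
    (T : ℕ → StrongDual ℝ V) {M : ℝ} (hT : ∀ k, ‖T k‖ ≤ M) :
    ∃ ψ : ℕ → ℕ, StrictMono ψ ∧ ∃ T₀ : StrongDual ℝ V,
      ∀ v, Tendsto (fun k => T (ψ k) v) atTop (𝓝 (T₀ v)) := by
  obtain ⟨T₀, -, ψ, hψ, hlim⟩ := WeakDual.isSeqCompact_closedBall ℝ V 0 M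
    (x := fun k => StrongDual.toWeakDual (T k)) fun k => by simpa using hT k
  exact ⟨ψ, hψ, WeakDual.toStrongDual T₀,
    fun v => ((WeakDual.eval_continuous v).tendsto _).comp hlim⟩

namespace NormedSpace

variable (V) in
def IsReflexive : Prop := Surjective (inclusionInDoubleDual ℝ V)

namespace IsReflexive

theorem strongDual (hV : IsReflexive V) : IsReflexive (StrongDual ℝ V) := by
  intro Ξ
  refine ⟨Ξ.comp (inclusionInDoubleDual ℝ V), ContinuousLinearMap.ext fun Φ => ?_⟩
  obtain ⟨v, rfl⟩ := hV Φ
  simp [dual_def]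

theorem submodule (hV : IsReflexive V) (Z : Submodule ℝ V)
    (hZ : IsClosed (Z : Set V)) : IsReflexive Z := by
  intro ζ
  -- the bidual element `f ↦ ζ (f|_Z)` of `V` comes from some `w ∈ V`
  let ρ : StrongDual ℝ V →L[ℝ] StrongDual ℝ Z :=
    (ContinuousLinearMap.compL ℝ Z V ℝ).flip Z.subtypeL
  obtain ⟨w, hw⟩ := hV (ζ.comp ρ)
  have hwζ : ∀ f : StrongDual ℝ V, f w = ζ (f.comp Z.subtypeL) := fun f =>
    DFunLike.congr_fun hw f
  have hwZ : w ∈ Z := by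
    by_contra hwZ
    obtain ⟨f, hfw, hfZ⟩ := Z.exists_strongDual_apply_ne_zero_of_notMem hZ hwZ
    have hf0 : f.comp Z.subtypeL = 0 := ContinuousLinearMap.ext fun z => hfZ z z.2
    exact hfw (by rw [hwζ, hf0, map_zero])
  refine ⟨⟨w, hwZ⟩, ContinuousLinearMap.ext fun h => ?_⟩
  obtain ⟨g, hg, -⟩ := exists_extension_norm_eq Z h
  have hgh : g.comp Z.subtypeL = h := ContinuousLinearMap.ext hg
  rw [dual_def, ← hg, ← hgh]
  exact hwζ g

/-- The closed span `Z` of the sequence is separable and reflexive, so `Z*` is separable and the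
sequential Banach–Alaoglu theorem applies to the image of the sequence in `Z**`. -/
theorem exists_subseq_weakTendsto (hV : IsReflexive V) (w : ℕ → V) {M : ℝ}
    (hw : ∀ k, ‖w k‖ ≤ M) :
    ∃ ψ : ℕ → ℕ, StrictMono ψ ∧ ∃ w₀ : V, WeakTendsto (w ∘ ψ) w₀ := by
  set Z := (Submodule.span ℝ (Set.range w)).topologicalClosure
  have hZ : IsClosed (Z : Set V) := Submodule.isClosed_topologicalClosure _
  have hwZ : ∀ k, w k ∈ Z := fun k =>
    Submodule.le_topologicalClosure _ (Submodule.subset_span ⟨k, rfl⟩)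
  have hZrefl := hV.submodule Z hZ
  have : SeparableSpace Z := by
    refine IsSeparable.separableSpace ?_
    rw [Submodule.topologicalClosure_coe]
    exact (Set.countable_range w).isSeparable.span.closure
  have : SeparableSpace (StrongDual ℝ (StrongDual ℝ Z)) :=
    hZrefl.denseRange.separableSpace (inclusionInDoubleDual ℝ Z).continuous
  have : SeparableSpace (StrongDual ℝ Z) :=
    separableSpace_of_separableSpace_strongDual (V := StrongDual ℝ Z)
  obtain ⟨ψ, hψ, T₀, hT⟩ := exists_subseq_tendsto_apply_of_separableSpace
    (fun k => inclusionInDoubleDual ℝ Z ⟨w k, hwZ k⟩) (M := M)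
    fun k => (double_dual_bound ℝ Z _).trans (hw k)
  obtain ⟨z₀, rfl⟩ := hZrefl T₀
  exact ⟨ψ, hψ, z₀, fun f => by simpa using hT (f.comp Z.subtypeL)⟩

theorem exists_subseq_tendsto_apply (hV : IsReflexive V) (g : ℕ → StrongDual ℝ V) {M : ℝ}
    (hg : ∀ k, ‖g k‖ ≤ M) :
    ∃ ψ : ℕ → ℕ, StrictMono ψ ∧ ∃ g₀ : StrongDual ℝ V,
      ∀ v, Tendsto (fun k => g (ψ k) v) atTop (𝓝 (g₀ v)) := by
  obtain ⟨ψ, hψ, g₀, hg₀⟩ := hV.strongDual.exists_subseq_weakTendsto g hg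
  exact ⟨ψ, hψ, g₀, fun v => by simpa using hg₀ (inclusionInDoubleDual ℝ V v)⟩

end IsReflexive

end NormedSpace

theorem WeakTendsto.map {u : ℕ → V} {x : V} (hu : WeakTendsto u x) (T : V →L[ℝ] U) :
    WeakTendsto (fun n => T (u n)) (T x) :=
  fun f => hu (f.comp T)

theorem WeakTendsto.map_eq_zero {u : ℕ → V} {x : V} (hu : WeakTendsto u x) {T : V →L[ℝ] U}
    (hT : Tendsto (fun k => ‖T (u k)‖) atTop (𝓝 0)) : T x = 0 := by
  refine SeparatingDual.eq_zero_of_forall_dual_eq_zero (R := ℝ) fun f => ?_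
  refine tendsto_nhds_unique (hu (f.comp T)) (squeeze_zero_norm (fun k => f.le_opNorm _) ?_)
  simpa using hT.const_mul ‖f‖

theorem le_of_weakTendsto_of_forall_le {E : V → ℝ}
    (hE : ∀ (x : V) (u : ℕ → V), WeakTendsto u x →
      ((E x : EReal)) ≤ liminf (fun n => ((E (u n) : EReal))) atTop)
    {u : ℕ → V} {x : V} (hu : WeakTendsto u x) {c : ℕ → ℝ} {l : ℝ}
    (hc : Tendsto c atTop (𝓝 l)) (hEc : ∀ k, E (u k) ≤ c k) : E x ≤ l := by
  have := (hE x u hu).trans <| liminf_le_liminf (Eventually.of_forall fun k =>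
    EReal.coe_le_coe_iff.mpr (hEc k))
  rwa [(EReal.tendsto_coe.mpr hc).liminf_eq, EReal.coe_le_coe_iff] at this

theorem tendsto_apply_of_tendsto {g : ℕ → StrongDual ℝ V} {g₀ : StrongDual ℝ V} {C : ℝ}
    (hg : ∀ k, ‖g k‖ ≤ C) {s : ℕ → V} {v : V} (hs : Tendsto s atTop (𝓝 v))
    (hgv : Tendsto (fun k => g k v) atTop (𝓝 (g₀ v))) :
    Tendsto (fun k => g k (s k)) atTop (𝓝 (g₀ v)) := by
  have hsv : Tendsto (fun k => g k (s k - v)) atTop (𝓝 0) := by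
    refine squeeze_zero_norm (fun k => ((g k).le_opNorm _).trans
      (mul_le_mul_of_nonneg_right (hg k) (norm_nonneg _))) ?_
    simpa using (tendsto_iff_norm_sub_tendsto_zero.mp hs).const_mul C
  simpa using hsv.add hgv

def ContinuousLinearMap.IsCompletelyContinuous (T : V →L[ℝ] U) : Prop :=
  ∀ (u : ℕ → V) (x : V), WeakTendsto u x → Tendsto (fun n => T (u n)) atTop (𝓝 (T x))

theorem NormedSpace.IsReflexive.tendsto_comp_of_isCompletelyContinuous
    (hV : IsReflexive V) {T : V →L[ℝ] U} (hT : T.IsCompletelyContinuous)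
    {g : ℕ → StrongDual ℝ U} {g₀ : StrongDual ℝ U} {C : ℝ} (hg : ∀ k, ‖g k‖ ≤ C)
    (hg₀ : ∀ y, Tendsto (fun k => g k y) atTop (𝓝 (g₀ y))) :
    Tendsto (fun k => (g k).comp T) atTop (𝓝 (g₀.comp T)) := by
  rw [tendsto_iff_norm_sub_tendsto_zero]
  have hz : ∀ k : ℕ, ∃ z : V, ‖z‖ ≤ 1 ∧
      ‖(g k).comp T - g₀.comp T‖ ≤ ‖(g k - g₀) (T z)‖ + 1 / (k + 1) := fun k => by
    obtain ⟨z, hz1, hz⟩ := ((g k).comp T - g₀.comp T).exists_lt_apply_of_lt_opNorm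
      (sub_lt_self _ Nat.one_div_pos_of_nat)
    refine ⟨z, hz1.le, (sub_lt_iff_lt_add.mp ?_).le⟩
    simpa using hz
  choose z hz1 hz using hz
  refine tendsto_of_subseq_tendsto fun ns hns => ?_
  obtain ⟨ms, hms, z₀, hz₀⟩ := hV.exists_subseq_weakTendsto (z ∘ ns) fun k => hz1 _
  have hTz : Tendsto (fun k => (g (ns (ms k)) - g₀) (T (z (ns (ms k))))) atTop (𝓝 0) := by
    refine (tendsto_apply_of_tendsto (g₀ := 0) (C := C + ‖g₀‖)
      (fun k => (norm_sub_le _ _).trans (by linarith [hg (ns (ms k))])) (hT _ _ hz₀) ?_)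
    simpa using ((hg₀ (T z₀)).comp (hns.comp hms.tendsto_atTop)).sub_const (g₀ (T z₀))
  have hk : Tendsto (fun k => 1 / ((ns (ms k) : ℝ) + 1)) atTop (𝓝 0) :=
    tendsto_one_div_add_atTop_nhds_zero_nat.comp (hns.comp hms.tendsto_atTop)
  exact ⟨ms, squeeze_zero (fun _ => norm_nonneg _) (fun k => hz _)
    (by simpa using hTz.norm.add hk)⟩

theorem tendsto_zero_of_mul_rpow_le {a c : ℕ → ℝ} {p K : ℝ} (hp : 0 < p) (ha : ∀ k, 0 ≤ a k)
    (hc : Tendsto c atTop atTop) (hc0 : ∀ k, 0 < c k) (hK : ∀ k, c k * a k ^ p ≤ K) :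
    Tendsto a atTop (𝓝 0) := by
  have hap : Tendsto (fun k => a k ^ p) atTop (𝓝 0) :=
    squeeze_zero (fun k => Real.rpow_nonneg (ha k) p)
      (fun k => (le_div_iff₀' (hc0 k)).mpr (hK k)) (tendsto_const_nhds.div_atTop hc)
  have hroot :=
    (Real.continuousAt_rpow_const 0 p⁻¹ (Or.inr (inv_nonneg.mpr hp.le))).tendsto.comp hap
  rw [Real.zero_rpow (inv_ne_zero hp.ne')] at hroot
  exact hroot.congr fun k => Real.rpow_rpow_inv (ha k) hp.ne'

theorem forall_le_of_exists_subseq_tendsto {ι : Type*} {P : ℕ → ι → Prop} {d : ℕ → ι → ℝ}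
    (h : ∀ (φ : ℕ → ℕ) (i : ℕ → ι), StrictMono φ → (∀ k, P (φ k) (i k)) →
      ∃ ψ : ℕ → ℕ, Tendsto (fun k => d (φ (ψ k)) (i (ψ k))) atTop (𝓝 0))
    {ε : ℝ} (hε : 0 < ε) : ∃ N, ∀ n, N ≤ n → ∀ i, P n i → d n i ≤ ε := by
  by_contra! hfar
  obtain ⟨φ, hφ, hφfar⟩ := extraction_of_frequently_atTop (frequently_atTop.mpr hfar)
  choose i hi hifar using hφfar
  obtain ⟨ψ, hψ⟩ := h φ i hφ hi
  obtain ⟨k, hk⟩ := (hψ.eventually (gt_mem_nhds hε)).exists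
  exact (hifar (ψ k)).not_gt hk

def EquiCoercive (G : ℕ → V → EReal) : Prop :=
  ∀ r : ℝ, ∃ C : ℝ, ∀ n v, G n v ≤ r → ‖v‖ ≤ C

section DeepRitz

variable {X B Y : Type*} [NormedAddCommGroup X] [NormedSpace ℝ X] [NormedAddCommGroup B]
  [NormedSpace ℝ B] [NormedAddCommGroup Y] [NormedSpace ℝ Y]

/-- The penalized functional `F_n^f`; it is `⊤` off the ansatz set `A n`. -/
noncomputable def penalizedFunctional (E : X → ℝ) (γ : X →L[ℝ] B) (p : ℝ) (lam : ℕ → ℝ)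
    (A : ℕ → Set X) (f : StrongDual ℝ X) (n : ℕ) (x : X) : EReal :=
  if x ∈ A n then ((E x + lam n * ‖γ x‖ ^ p - f x : ℝ) : EReal) else ⊤

/-- The limit functional `F^f`, finite exactly on `X₀ = ker γ`. -/
noncomputable def constrainedFunctional (E : X → ℝ) (γ : X →L[ℝ] B) (f : StrongDual ℝ X)
    (x : X) : EReal :=
  if γ x = 0 then ((E x - f x : ℝ) : EReal) else ⊤

theorem equiCoercive_comp_of_injective {P : StrongDual ℝ X → ℕ → X → EReal} {j : X →L[ℝ] Y}
    (hP : ∀ g : ℕ → StrongDual ℝ Y, (∃ M : ℝ, ∀ n, ‖g n‖ ≤ M) →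
      EquiCoercive fun n => P ((g n).comp j) n)
    {φ : ℕ → ℕ} (hφ : Injective φ) {g : ℕ → StrongDual ℝ Y} {M : ℝ} (hg : ∀ k, ‖g k‖ ≤ M) :
    EquiCoercive fun k => P ((g k).comp j) (φ k) := by
  have hext : ∀ n, ‖extend φ g (fun _ => g 0) n‖ ≤ M := fun n => by
    by_cases h : ∃ k, φ k = n
    · obtain ⟨k, rfl⟩ := h
      rw [hφ.extend_apply]
      exact hg k
    · rw [extend_apply' _ _ _ h]
      exact hg 0
  intro r
  obtain ⟨C, hC⟩ := hP _ ⟨M, hext⟩ r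
  exact ⟨C, fun k x hx => hC (φ k) x (by simpa only [hφ.extend_apply] using hx)⟩

variable {E : X → ℝ} {γ : X →L[ℝ] B} {p : ℝ} {lam : ℕ → ℝ} {A : ℕ → Set X}

theorem exists_forall_iInf_penalizedFunctional_le (hE : Continuous E) {u : ℕ → X}
    (huA : ∀ n, u n ∈ A n) (hu : Tendsto u atTop (𝓝 0))
    (hupen : Tendsto (fun n => lam n * ‖γ (u n)‖ ^ p) atTop (𝓝 0)) (R : ℝ) :
    ∃ r : ℝ, ∀ n (f : StrongDual ℝ X), ‖f‖ ≤ R →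
      ⨅ z, penalizedFunctional E γ p lam A f n z ≤ r := by
  have hbound : Tendsto (fun n => E (u n) + lam n * ‖γ (u n)‖ ^ p + R * ‖u n‖) atTop
      (𝓝 (E 0 + 0 + R * ‖(0 : X)‖)) :=
    (((hE.tendsto 0).comp hu).add hupen).add (hu.norm.const_mul R)
  obtain ⟨r, hr⟩ := hbound.bddAbove_range
  refine ⟨r, fun n f hf => (iInf_le _ (u n)).trans ?_⟩
  rw [penalizedFunctional, if_pos (huA n), EReal.coe_le_coe_iff]
  have hfu : -f (u n) ≤ R * ‖u n‖ := by
    calc -f (u n) ≤ ‖f (u n)‖ := neg_le_abs _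
      _ ≤ ‖f‖ * ‖u n‖ := f.le_opNorm _
      _ ≤ R * ‖u n‖ := mul_le_mul_of_nonneg_right hf (norm_nonneg _)
  linarith [hr ⟨n, rfl⟩]

theorem mem_and_le_of_le_iInf_penalizedFunctional_add {f : StrongDual ℝ X} {n : ℕ} {x w : X}
    {δ : ℝ}
    (hx : penalizedFunctional E γ p lam A f n x ≤
      (⨅ z, penalizedFunctional E γ p lam A f n z) + (δ : EReal)) (hw : w ∈ A n) :
    x ∈ A n ∧ E x + lam n * ‖γ x‖ ^ p - f x ≤ E w + lam n * ‖γ w‖ ^ p - f w + δ := by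
  have h := hx.trans (add_le_add (iInf_le _ w) le_rfl)
  rw [penalizedFunctional, penalizedFunctional, if_pos hw] at h
  split_ifs at h with hxA
  · exact ⟨hxA, by exact_mod_cast h⟩
  · rw [← EReal.coe_add, top_le_iff] at h
    exact absurd h (EReal.coe_ne_top _)

variable {j : X →L[ℝ] Y} {φ : ℕ → ℕ} {g : ℕ → StrongDual ℝ Y} {g₀ : StrongDual ℝ Y} {M : ℝ}
  {δ : ℕ → ℝ} {x : ℕ → X}

theorem exists_tendsto_of_recoverySeq (hE : Continuous E) (hφ : Tendsto φ atTop atTop)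
    (hg : ∀ k, ‖g k‖ ≤ M) (hg₀ : ∀ y, Tendsto (fun k => g k y) atTop (𝓝 (g₀ y)))
    (hδ : Tendsto δ atTop (𝓝 0))
    (hx : ∀ k, penalizedFunctional E γ p lam A ((g k).comp j) (φ k) (x k) ≤
      (⨅ z, penalizedFunctional E γ p lam A ((g k).comp j) (φ k) z) + (δ (φ k) : EReal))
    {z : X} {u : ℕ → X} (huA : ∀ n, u n ∈ A n) (hu : Tendsto u atTop (𝓝 z))
    (hupen : Tendsto (fun n => lam n * ‖γ (u n)‖ ^ p) atTop (𝓝 0)) :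
    ∃ b : ℕ → ℝ, Tendsto b atTop (𝓝 (E z - g₀ (j z))) ∧
      ∀ k, E (x k) + lam (φ k) * ‖γ (x k)‖ ^ p - g k (j (x k)) ≤ b k := by
  refine ⟨fun k => E (u (φ k)) + lam (φ k) * ‖γ (u (φ k))‖ ^ p - g k (j (u (φ k))) + δ (φ k),
    ?_, fun k => (mem_and_le_of_le_iInf_penalizedFunctional_add (hx k) (huA _)).2⟩
  have hgu := tendsto_apply_of_tendsto hg ((j.continuous.tendsto z).comp (hu.comp hφ)) (hg₀ (j z))
  simpa using ((((hE.tendsto z).comp (hu.comp hφ)).add (hupen.comp hφ)).sub hgu).add (hδ.comp hφ)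

theorem map_eq_zero_and_isMinimizer_of_weakTendsto (hE : Continuous E)
    (hElsc : ∀ (x : X) (u : ℕ → X), WeakTendsto u x →
      ((E x : EReal)) ≤ liminf (fun n => ((E (u n) : EReal))) atTop)
    (hEbdd : ∃ m : ℝ, ∀ x : X, m ≤ E x) (hp : 0 < p) (hlam_pos : ∀ n, 0 < lam n)
    (hlam : Tendsto lam atTop atTop)
    (hA1 : ∀ x : X, γ x = 0 → ∃ u : ℕ → X, (∀ n, u n ∈ A n) ∧
      Tendsto u atTop (𝓝 x) ∧ Tendsto (fun n => lam n * ‖γ (u n)‖ ^ p) atTop (𝓝 0))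
    (hj : j.IsCompletelyContinuous) (hφ : Tendsto φ atTop atTop) (hg : ∀ k, ‖g k‖ ≤ M)
    (hg₀ : ∀ y, Tendsto (fun k => g k y) atTop (𝓝 (g₀ y))) (hδ : Tendsto δ atTop (𝓝 0))
    (hx : ∀ k, penalizedFunctional E γ p lam A ((g k).comp j) (φ k) (x k) ≤
      (⨅ z, penalizedFunctional E γ p lam A ((g k).comp j) (φ k) z) + (δ (φ k) : EReal))
    {x₀ : X} (hx₀ : WeakTendsto x x₀) :
    γ x₀ = 0 ∧ ∀ z, constrainedFunctional E γ (g₀.comp j) x₀ ≤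
      constrainedFunctional E γ (g₀.comp j) z := by
  have hgx : Tendsto (fun k => g k (j (x k))) atTop (𝓝 (g₀ (j x₀))) :=
    tendsto_apply_of_tendsto hg (hj x x₀ hx₀) (hg₀ _)
  have hbound : ∀ z, γ z = 0 → ∃ b : ℕ → ℝ, Tendsto b atTop (𝓝 (E z - g₀ (j z))) ∧
      ∀ k, E (x k) + lam (φ k) * ‖γ (x k)‖ ^ p - g k (j (x k)) ≤ b k := fun z hz => by
    obtain ⟨u, huA, hu, hupen⟩ := hA1 z hz
    exact exists_tendsto_of_recoverySeq hE hφ hg hg₀ hδ hx huA hu hupen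
  have hγx₀ : γ x₀ = 0 := by
    obtain ⟨b, hb, hxb⟩ := hbound 0 (map_zero γ)
    obtain ⟨m, hm⟩ := hEbdd
    obtain ⟨K, hK⟩ := (hb.add hgx).bddAbove_range
    refine hx₀.map_eq_zero (tendsto_zero_of_mul_rpow_le hp (fun k => norm_nonneg _)
      (hlam.comp hφ) (fun k => hlam_pos _) (K := K - m) fun k => ?_)
    have hKk : b k + g k (j (x k)) ≤ K := hK ⟨k, rfl⟩
    simp only [comp_apply]
    linarith [hxb k, hm (x k)]
  refine ⟨hγx₀, fun z => ?_⟩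
  rw [constrainedFunctional, constrainedFunctional, if_pos hγx₀]
  split_ifs with hz
  · obtain ⟨b, hb, hxb⟩ := hbound z hz
    have hpen : ∀ k, 0 ≤ lam (φ k) * ‖γ (x k)‖ ^ p := fun k =>
      mul_nonneg (hlam_pos _).le (Real.rpow_nonneg (norm_nonneg _) p)
    have := le_of_weakTendsto_of_forall_le hElsc hx₀ (hb.add hgx) fun k => by
      linarith [hxb k, hpen k]
    exact EReal.coe_le_coe_iff.mpr (by simp only [ContinuousLinearMap.comp_apply]; linarith)
  · exact le_top

theorem tendsto_solution_of_tendsto_apply (hX : IsReflexive X) {K : Submodule ℝ X}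
    {S : StrongDual ℝ K → K}
    (hS : ∀ (φ : ℕ → StrongDual ℝ K) (φ₀ : StrongDual ℝ K), Tendsto φ atTop (𝓝 φ₀) →
      WeakTendsto (fun n => S (φ n)) (S φ₀))
    (hj : j.IsCompletelyContinuous) (hg : ∀ k, ‖g k‖ ≤ M)
    (hg₀ : ∀ y, Tendsto (fun k => g k y) atTop (𝓝 (g₀ y))) :
    Tendsto (fun k => j (S (((g k).comp j).comp K.subtypeL))) atTop
      (𝓝 (j (S ((g₀.comp j).comp K.subtypeL)))) := by
  have hres : Tendsto (fun k => ((g k).comp j).comp K.subtypeL) atTop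
      (𝓝 ((g₀.comp j).comp K.subtypeL)) :=
    (((ContinuousLinearMap.compL ℝ K X ℝ).flip K.subtypeL).continuous.tendsto _).comp
      (hX.tendsto_comp_of_isCompletelyContinuous hj hg hg₀)
  exact hj _ _ ((hS _ _ hres).map K.subtypeL)

theorem exists_subseq_tendsto_solution (hX : IsReflexive X) (hY : IsReflexive Y)
    (hE : Continuous E)
    (hElsc : ∀ (x : X) (u : ℕ → X), WeakTendsto u x →
      ((E x : EReal)) ≤ liminf (fun n => ((E (u n) : EReal))) atTop)
    (hEbdd : ∃ m : ℝ, ∀ x : X, m ≤ E x) (hp : 0 < p) (hlam_pos : ∀ n, 0 < lam n)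
    (hlam : Tendsto lam atTop atTop)
    (hA1 : ∀ x : X, γ x = 0 → ∃ u : ℕ → X, (∀ n, u n ∈ A n) ∧
      Tendsto u atTop (𝓝 x) ∧ Tendsto (fun n => lam n * ‖γ (u n)‖ ^ p) atTop (𝓝 0))
    (hj : j.IsCompletelyContinuous)
    {S : StrongDual ℝ (LinearMap.ker (γ : X →ₗ[ℝ] B)) → LinearMap.ker (γ : X →ₗ[ℝ] B)}
    (hS_uniq : ∀ (f : StrongDual ℝ X) (y : X), γ y = 0 →
      (∀ z, constrainedFunctional E γ f y ≤ constrainedFunctional E γ f z) →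
        y = S (f.comp (LinearMap.ker (γ : X →ₗ[ℝ] B)).subtypeL))
    (hS_demi : ∀ φ φ₀, Tendsto φ atTop (𝓝 φ₀) → WeakTendsto (fun n => S (φ n)) (S φ₀))
    (hcoer : ∀ g : ℕ → StrongDual ℝ Y, (∃ M : ℝ, ∀ n, ‖g n‖ ≤ M) →
      EquiCoercive fun n => penalizedFunctional E γ p lam A ((g n).comp j) n)
    (hδ : Tendsto δ atTop (𝓝 0)) (hφ : StrictMono φ) (hg : ∀ k, ‖g k‖ ≤ M)
    (hx : ∀ k, penalizedFunctional E γ p lam A ((g k).comp j) (φ k) (x k) ≤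
      (⨅ z, penalizedFunctional E γ p lam A ((g k).comp j) (φ k) z) + (δ (φ k) : EReal)) :
    ∃ ψ : ℕ → ℕ, Tendsto (fun k => ‖j (x (ψ k)) -
      j (S (((g (ψ k)).comp j).comp (LinearMap.ker (γ : X →ₗ[ℝ] B)).subtypeL))‖) atTop (𝓝 0) := by
  obtain ⟨u, huA, hu, hupen⟩ := hA1 0 (map_zero γ)
  obtain ⟨r, hr⟩ := exists_forall_iInf_penalizedFunctional_le hE huA hu hupen (M * ‖j‖)
  obtain ⟨D, hD⟩ := hδ.bddAbove_range
  obtain ⟨C, hC⟩ := equiCoercive_comp_of_injective hcoer hφ.injective hg (r + D)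
  have hxC : ∀ k, ‖x k‖ ≤ C := fun k => by
    refine hC k (x k) ((hx k).trans ?_)
    rw [EReal.coe_add]
    exact add_le_add (hr _ _ ((g k).opNorm_comp_le j |>.trans (by gcongr; exact hg k)))
      (EReal.coe_le_coe_iff.mpr (hD ⟨_, rfl⟩))
  obtain ⟨ψ₁, hψ₁, g₀, hg₀⟩ := hY.exists_subseq_tendsto_apply g hg
  obtain ⟨ψ₂, hψ₂, x₀, hx₀⟩ := hX.exists_subseq_weakTendsto (x ∘ ψ₁) fun k => hxC _
  have hg₀' : ∀ y, Tendsto (fun k => g (ψ₁ (ψ₂ k)) y) atTop (𝓝 (g₀ y)) := fun y =>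
    (hg₀ y).comp hψ₂.tendsto_atTop
  obtain ⟨hγx₀, hmin⟩ := map_eq_zero_and_isMinimizer_of_weakTendsto hE hElsc hEbdd hp hlam_pos
    hlam hA1 hj (hφ.comp (hψ₁.comp hψ₂)).tendsto_atTop (fun k => hg _) hg₀' hδ (fun k => hx _) hx₀
  refine ⟨ψ₁ ∘ ψ₂, ?_⟩
  have hlim := (hj _ _ hx₀).sub
    (tendsto_solution_of_tendsto_apply hX hS_demi hj (fun k => hg _) hg₀')
  rw [← hS_uniq _ x₀ hγx₀ hmin, sub_self] at hlim
  simpa using hlim.norm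

end DeepRitz

end

theorem deep_ritz_uniform_convergence_general
    {X B Y : Type*} [NormedAddCommGroup X] [NormedSpace ℝ X]
    [NormedAddCommGroup B] [NormedSpace ℝ B]
    [NormedAddCommGroup Y] [NormedSpace ℝ Y]
    (hXrefl : Function.Surjective (NormedSpace.inclusionInDoubleDual ℝ X))
    (hYrefl : Function.Surjective (NormedSpace.inclusionInDoubleDual ℝ Y))
    (γ : X →L[ℝ] B)
    (E : X → ℝ)
    -- E is bounded from below
    (hEbdd : ∃ m : ℝ, ∀ x : X, m ≤ E x)
    -- E is (sequentially) lower semicontinuous w.r.t. the weak topology of X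
    (hElsc : ∀ (x : X) (u : ℕ → X), WeakTendsto u x →
      ((E x : EReal)) ≤ liminf (fun n => ((E (u n) : EReal))) atTop)
    -- E is continuous w.r.t. the norm topology of X
    (hEcont : Continuous E)
    (p : ℝ) (hp : 1 < p)
    (lam : ℕ → ℝ) (hlam_pos : ∀ n, 0 < lam n) (hlam : Tendsto lam atTop atTop)
    (A : ℕ → Set X)
    -- the penalized functionals with right-hand side f
    (Fn : (X →L[ℝ] ℝ) → ℕ → X → EReal)
    (hFn : ∀ (f : X →L[ℝ] ℝ) (n : ℕ) (x : X), Fn f n x =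
      if x ∈ A n then ((E x + lam n * ‖γ x‖ ^ p - f x : ℝ) : EReal) else ⊤)
    -- the limit functionals with right-hand side f
    (F : (X →L[ℝ] ℝ) → X → EReal)
    (hF : ∀ (f : X →L[ℝ] ℝ) (x : X),
      F f x = if γ x = 0 then ((E x - f x : ℝ) : EReal) else ⊤)
    -- Assumption (A1)
    (hA1 : ∀ x : X, γ x = 0 → ∃ u : ℕ → X, (∀ n, u n ∈ A n) ∧
      Tendsto u atTop (𝓝 x) ∧
      Tendsto (fun n => lam n * ‖γ (u n)‖ ^ p) atTop (𝓝 0))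
    -- the second norm, encoded by an injective dense-range embedding j : X → Y
    (j : X →L[ℝ] Y)
    -- Assumption (A4): j is completely continuous
    (hA4 : ∀ (u : ℕ → X) (x : X), WeakTendsto u x →
      Tendsto (fun n => j (u n)) atTop (𝓝 (j x)))
    -- Assumption (A5): unique minimizers and a demi-continuous solution map S
    (S : (↥(LinearMap.ker (γ : X →ₗ[ℝ] B)) →L[ℝ] ℝ) → ↥(LinearMap.ker (γ : X →ₗ[ℝ] B)))
    (hS_uniq : ∀ (f : X →L[ℝ] ℝ) (y : X), γ y = 0 →
      (∀ z : X, F f y ≤ F f z) → y = (S (f.comp (LinearMap.ker (γ : X →ₗ[ℝ] B)).subtypeL) : X))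
    (hS_demi : ∀ (φ : ℕ → (↥(LinearMap.ker (γ : X →ₗ[ℝ] B)) →L[ℝ] ℝ))
      (φ₀ : ↥(LinearMap.ker (γ : X →ₗ[ℝ] B)) →L[ℝ] ℝ), Tendsto φ atTop (𝓝 φ₀) →
      ∀ ψ : ↥(LinearMap.ker (γ : X →ₗ[ℝ] B)) →L[ℝ] ℝ,
        Tendsto (fun n => ψ (S (φ n))) atTop (𝓝 (ψ (S φ₀))))
    -- uniform equi-coercivity: for every bounded sequence of right-hand sides
    -- in Y*, the corresponding penalized functionals are equi-coercive
    (hcoer : ∀ g : ℕ → (Y →L[ℝ] ℝ), (∃ M : ℝ, ∀ n, ‖g n‖ ≤ M) →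
      ∀ r : ℝ, ∃ C : ℝ, ∀ (n : ℕ) (x : X),
        Fn ((g n).comp j) n x ≤ (r : EReal) → ‖x‖ ≤ C)
    -- tolerances for the approximate solution sets
    (δ : ℕ → ℝ) (hδ : Tendsto δ atTop (𝓝 0))
    (R : ℝ) :
    -- uniform convergence over the ball ‖g‖ ≤ R in Y*
    ∀ ε : ℝ, 0 < ε → ∃ N : ℕ, ∀ n : ℕ, N ≤ n →
      ∀ g : Y →L[ℝ] ℝ, ‖g‖ ≤ R →
        ∀ x : X,
          Fn (g.comp j) n x ≤ (⨅ z : X, Fn (g.comp j) n z) + (δ n : EReal) →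
          ‖j x - j ((S ((g.comp j).comp (LinearMap.ker (γ : X →ₗ[ℝ] B)).subtypeL) : X))‖
            ≤ ε := by
  obtain rfl : Fn = penalizedFunctional E γ p lam A := funext₃ hFn
  obtain rfl : F = constrainedFunctional E γ := funext₂ hF
  intro ε hε
  obtain ⟨N, hN⟩ := forall_le_of_exists_subseq_tendsto (ι := (Y →L[ℝ] ℝ) × X)
    (P := fun n i => ‖i.1‖ ≤ R ∧ penalizedFunctional E γ p lam A (i.1.comp j) n i.2 ≤
      (⨅ z, penalizedFunctional E γ p lam A (i.1.comp j) n z) + (δ n : EReal))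
    (d := fun _ i => ‖j i.2 - j (S ((i.1.comp j).comp (LinearMap.ker (γ : X →ₗ[ℝ] B)).subtypeL))‖)
    (fun φ i hφ hi => exists_subseq_tendsto_solution hXrefl hYrefl hEcont hElsc hEbdd
      (zero_lt_one.trans hp) hlam_pos hlam hA1 hA4 hS_uniq hS_demi hcoer hδ hφ (fun k => (hi k).1)
      fun k => (hi k).2) hε
  exact ⟨N, fun n hn g hg x hx => hN n hn (g, x) ⟨hg, hx⟩⟩

/-- **Uniform convergence of the Deep Ritz Method.**
In the two-norm Deep Ritz setting with Assumptions (A1), (A4), (A5) and a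
uniform equi-coercivity condition, the convergence of quasi-minimizers towards
the exact solution, measured in the weaker norm `|x| = ‖j x‖`, is uniform over
all right-hand sides `g ∈ Y*` with `‖g‖ ≤ R`. -/
theorem deep_ritz_uniform_convergence
    {X B Y : Type*} [NormedAddCommGroup X] [NormedSpace ℝ X] [CompleteSpace X]
    [NormedAddCommGroup B] [NormedSpace ℝ B] [CompleteSpace B]
    [NormedAddCommGroup Y] [NormedSpace ℝ Y] [CompleteSpace Y]
    (hXrefl : Function.Surjective (NormedSpace.inclusionInDoubleDual ℝ X))
    (hBrefl : Function.Surjective (NormedSpace.inclusionInDoubleDual ℝ B))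
    (hYrefl : Function.Surjective (NormedSpace.inclusionInDoubleDual ℝ Y))
    (γ : X →L[ℝ] B)
    (E : X → ℝ)
    -- E is bounded from below
    (hEbdd : ∃ m : ℝ, ∀ x : X, m ≤ E x)
    -- E is (sequentially) lower semicontinuous w.r.t. the weak topology of X
    (hElsc : ∀ (x : X) (u : ℕ → X), WeakTendsto u x →
      ((E x : EReal)) ≤ liminf (fun n => ((E (u n) : EReal))) atTop)
    -- E is continuous w.r.t. the norm topology of X
    (hEcont : Continuous E)
    (p : ℝ) (hp : 1 < p)
    (lam : ℕ → ℝ) (hlam_pos : ∀ n, 0 < lam n) (hlam : Tendsto lam atTop atTop)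
    (A : ℕ → Set X)
    -- the penalized functionals with right-hand side f
    (Fn : (X →L[ℝ] ℝ) → ℕ → X → EReal)
    (hFn : ∀ (f : X →L[ℝ] ℝ) (n : ℕ) (x : X), Fn f n x =
      if x ∈ A n then ((E x + lam n * ‖γ x‖ ^ p - f x : ℝ) : EReal) else ⊤)
    -- the limit functionals with right-hand side f
    (F : (X →L[ℝ] ℝ) → X → EReal)
    (hF : ∀ (f : X →L[ℝ] ℝ) (x : X),
      F f x = if γ x = 0 then ((E x - f x : ℝ) : EReal) else ⊤)
    -- Assumption (A1)
    (hA1 : ∀ x : X, γ x = 0 → ∃ u : ℕ → X, (∀ n, u n ∈ A n) ∧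
      Tendsto u atTop (𝓝 x) ∧
      Tendsto (fun n => lam n * ‖γ (u n)‖ ^ p) atTop (𝓝 0))
    -- the second norm, encoded by an injective dense-range embedding j : X → Y
    (j : X →L[ℝ] Y) (hj_inj : Function.Injective j) (hj_dense : DenseRange j)
    -- Assumption (A4): j is completely continuous
    (hA4 : ∀ (u : ℕ → X) (x : X), WeakTendsto u x →
      Tendsto (fun n => j (u n)) atTop (𝓝 (j x)))
    -- Assumption (A5): unique minimizers and a demi-continuous solution map S
    (S : (↥(LinearMap.ker (γ : X →ₗ[ℝ] B)) →L[ℝ] ℝ) → ↥(LinearMap.ker (γ : X →ₗ[ℝ] B)))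
    (hS_min : ∀ (f : X →L[ℝ] ℝ) (z : X),
      F f ((S (f.comp (LinearMap.ker (γ : X →ₗ[ℝ] B)).subtypeL) : X)) ≤ F f z)
    (hS_uniq : ∀ (f : X →L[ℝ] ℝ) (y : X), γ y = 0 →
      (∀ z : X, F f y ≤ F f z) → y = (S (f.comp (LinearMap.ker (γ : X →ₗ[ℝ] B)).subtypeL) : X))
    (hS_demi : ∀ (φ : ℕ → (↥(LinearMap.ker (γ : X →ₗ[ℝ] B)) →L[ℝ] ℝ))
      (φ₀ : ↥(LinearMap.ker (γ : X →ₗ[ℝ] B)) →L[ℝ] ℝ), Tendsto φ atTop (𝓝 φ₀) →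
      ∀ ψ : ↥(LinearMap.ker (γ : X →ₗ[ℝ] B)) →L[ℝ] ℝ,
        Tendsto (fun n => ψ (S (φ n))) atTop (𝓝 (ψ (S φ₀))))
    -- uniform equi-coercivity: for every bounded sequence of right-hand sides
    -- in Y*, the corresponding penalized functionals are equi-coercive
    (hcoer : ∀ g : ℕ → (Y →L[ℝ] ℝ), (∃ M : ℝ, ∀ n, ‖g n‖ ≤ M) →
      ∀ r : ℝ, ∃ C : ℝ, ∀ (n : ℕ) (x : X),
        Fn ((g n).comp j) n x ≤ (r : EReal) → ‖x‖ ≤ C)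
    -- tolerances for the approximate solution sets
    (δ : ℕ → ℝ) (hδ0 : ∀ n, 0 ≤ δ n) (hδ : Tendsto δ atTop (𝓝 0))
    (R : ℝ) (hR : 0 < R) :
    -- uniform convergence over the ball ‖g‖ ≤ R in Y*
    ∀ ε : ℝ, 0 < ε → ∃ N : ℕ, ∀ n : ℕ, N ≤ n →
      ∀ g : Y →L[ℝ] ℝ, ‖g‖ ≤ R →
        ∀ x : X,
          Fn (g.comp j) n x ≤ (⨅ z : X, Fn (g.comp j) n z) + (δ n : EReal) →
          ‖j x - j ((S ((g.comp j).comp (LinearMap.ker (γ : X →ₗ[ℝ] B)).subtypeL) : X))‖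
            ≤ ε :=
  deep_ritz_uniform_convergence_general hXrefl hYrefl γ E hEbdd hElsc hEcont p hp lam hlam_pos hlam
    A Fn hFn F hF hA1 j hA4 S hS_uniq hS_demi hcoer δ hδ R
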